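/- arXiv:1407.0523 — 12 statements merged into one kernel-verified Lean document; each statement's English description precedes it below -/
import Mathlib

section
/- A nonabelian nilpotent finite-dimensional real Lie algebra admits no cyclic inner product. -/
/-!
A nonabelian nilpotent Lie algebra has a nonzero central element `W` in its derived algebra
`[L, L]`. For a cyclic form `B`, centrality of `W` kills two of the three terms of the cyclic
identity for `(X, Y, W)`, so `B [X, Y] W = 0`: thus `W` is orthogonal to `[L, L]`, hence to itself,
and `B` is not positive definite.
-/

open LieModule

section CyclicForm

variable {R L M : Type*} [CommRing R] [LieRing L] [LieAlgebra R L] [AddCommGroup M] [Module R M]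
  {B : L →ₗ[R] L →ₗ[R] M}

lemma apply_lie_eq_zero_of_mem_maxTrivSubmodule
    (hB : ∀ X Y Z : L, B ⁅X, Y⁆ Z + B ⁅Y, Z⁆ X + B ⁅Z, X⁆ Y = 0)
    {W : L} (hW : W ∈ maxTrivSubmodule R L L) (X Y : L) : B ⁅X, Y⁆ W = 0 := by
  have hYW : ⁅Y, W⁆ = 0 := hW Y
  have hWX : ⁅W, X⁆ = 0 := by rw [← lie_skew, hW X, neg_zero]
  simpa [hYW, hWX] using hB X Y W

lemma lowerCentralSeries_one_le_ker_flip_of_mem_maxTrivSubmodule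
    (hB : ∀ X Y Z : L, B ⁅X, Y⁆ Z + B ⁅Y, Z⁆ X + B ⁅Z, X⁆ Y = 0)
    {W : L} (hW : W ∈ maxTrivSubmodule R L L) :
    (lowerCentralSeries R L L 1).toSubmodule ≤ LinearMap.ker (B.flip W) := by
  rw [lowerCentralSeries_succ, lowerCentralSeries_zero,
    LieSubmodule.lieIdeal_oper_eq_linear_span', Submodule.span_le]
  rintro _ ⟨X, -, Y, -, rfl⟩
  exact apply_lie_eq_zero_of_mem_maxTrivSubmodule hB hW X Y

end CyclicForm

lemma LieAlgebra.exists_mem_lowerCentralSeries_one_mem_maxTrivSubmodule_ne_zero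
    {R L : Type*} [CommRing R] [LieRing L] [LieAlgebra R L] [LieRing.IsNilpotent L]
    (h : ¬ IsLieAbelian L) :
    ∃ W ∈ lowerCentralSeries R L L 1, W ∈ maxTrivSubmodule R L L ∧ W ≠ 0 := by
  have := mt (disjoint_lowerCentralSeries_maxTrivSubmodule_iff R L L).mp h
  rw [← LieSubmodule.disjoint_toSubmodule, Submodule.disjoint_def] at this
  push Not at this
  exact this

theorem nilpotent_nonabelian_no_cyclic_general {L : Type*} [LieRing L] [LieAlgebra ℝ L]
    [LieRing.IsNilpotent L]
    (hnab : ¬ IsLieAbelian L) :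
    ¬ ∃ B : L →ₗ[ℝ] L →ₗ[ℝ] ℝ,
        (∀ x y : L, B x y = B y x) ∧
        (∀ x : L, x ≠ 0 → 0 < B x x) ∧
        (∀ X Y Z : L, B ⁅X, Y⁆ Z + B ⁅Y, Z⁆ X + B ⁅Z, X⁆ Y = 0) := by
  rintro ⟨B, -, hpos, hcyc⟩
  obtain ⟨W, hW₁, hWtriv, hW₀⟩ :=
    LieAlgebra.exists_mem_lowerCentralSeries_one_mem_maxTrivSubmodule_ne_zero (R := ℝ) hnab
  have hBWW : B W W = 0 :=
    lowerCentralSeries_one_le_ker_flip_of_mem_maxTrivSubmodule hcyc hWtriv hW₁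
  exact (hpos W hW₀).ne' hBWW

/-- A nonabelian nilpotent finite-dimensional real Lie algebra admits no
cyclic inner product. -/
theorem nilpotent_nonabelian_no_cyclic {L : Type*} [LieRing L] [LieAlgebra ℝ L]
    [FiniteDimensional ℝ L] [LieRing.IsNilpotent L]
    (hnab : ¬ IsLieAbelian L) :
    ¬ ∃ B : L →ₗ[ℝ] L →ₗ[ℝ] ℝ,
        (∀ x y : L, B x y = B y x) ∧
        (∀ x : L, x ≠ 0 → 0 < B x x) ∧
        (∀ X Y Z : L, B ⁅X, Y⁆ Z + B ⁅Y, Z⁆ X + B ⁅Z, X⁆ Y = 0) :=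
  nilpotent_nonabelian_no_cyclic_general hnab
end

section
/- Let g be a finite-dimensional real Lie algebra with inner product ⟨·,·⟩, and suppose g = b ⊕ u is an orthogonal direct sum where b is an abelian subalgebra, u is an abelian ideal, and ad_B is skew-symmetric for every B ∈ b. If the inner product is cyclic, then g is abelian. -/
/-!
For `W ∈ b` and `U ∈ u` put `Z = ⁅W, U⁆ ∈ u`. In the cyclic identity for `(W, U, Z)` the middle
term vanishes because `u` is abelian, and skew-symmetry of `ad_W` turns the last term into
`⟨Z, Z⟩`; hence `2 ⟨Z, Z⟩ = 0` and `Z = 0`. So `b` and `u` commute, and `g = b + u` is abelian.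
-/

section

variable {R L : Type*} [CommRing R] [LieRing L] [LieAlgebra R L]

theorem isLieAbelian_of_codisjoint {p q : Submodule R L} (hpq : Codisjoint p q)
    (hp : ∀ x ∈ p, ∀ y ∈ p, ⁅x, y⁆ = 0) (hq : ∀ x ∈ q, ∀ y ∈ q, ⁅x, y⁆ = 0)
    (hpq' : ∀ x ∈ p, ∀ y ∈ q, ⁅x, y⁆ = 0) : IsLieAbelian L := by
  refine ⟨fun x y => ?_⟩
  obtain ⟨xp, xq, hxp, hxq, rfl⟩ := Submodule.codisjoint_iff_exists_add_eq.mp hpq x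
  obtain ⟨yp, yq, hyp, hyq, rfl⟩ := Submodule.codisjoint_iff_exists_add_eq.mp hpq y
  have hqp : ⁅xq, yp⁆ = 0 := by rw [← lie_skew, hpq' yp hyp xq hxq, neg_zero]
  simp only [add_lie, lie_add, hp xp hxp yp hyp, hq xq hxq yq hyq, hpq' xp hxp yq hyq, hqp,
    add_zero]

end

theorem lie_eq_zero_of_cyclic_of_skew {R L : Type*} [Field R] [LinearOrder R]
    [IsStrictOrderedRing R] [LieRing L] [LieAlgebra R L] (B : L →ₗ[R] L →ₗ[R] R)
    (hpos : ∀ x : L, x ≠ 0 → 0 < B x x)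
    (hcyc : ∀ X Y Z : L, B ⁅X, Y⁆ Z + B ⁅Y, Z⁆ X + B ⁅Z, X⁆ Y = 0) {W U : L}
    (hskew : ∀ X Y : L, B ⁅W, X⁆ Y = - B X ⁅W, Y⁆) (hU : ⁅U, ⁅W, U⁆⁆ = 0) :
    ⁅W, U⁆ = 0 := by
  set Z := ⁅W, U⁆
  have hlast : B ⁅Z, W⁆ U = B Z Z := by
    rw [← lie_skew, map_neg, LinearMap.neg_apply, hskew, neg_neg]
  have hZZ : B Z Z + B Z Z = 0 := by
    simpa only [hU, map_zero, LinearMap.zero_apply, add_zero, hlast] using hcyc W U Z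
  by_contra hZ
  linarith [hpos Z hZ]

theorem flat_cyclic_is_abelian_general {L : Type*} [LieRing L] [LieAlgebra ℝ L]
    (B : L →ₗ[ℝ] L →ₗ[ℝ] ℝ)
    (hpos : ∀ x : L, x ≠ 0 → 0 < B x x)
    (hcyc : ∀ X Y Z : L, B ⁅X, Y⁆ Z + B ⁅Y, Z⁆ X + B ⁅Z, X⁆ Y = 0)
    (b : LieSubalgebra ℝ L) (u : LieIdeal ℝ L)
    (hbab : ∀ x ∈ b, ∀ y ∈ b, ⁅x, y⁆ = (0 : L))
    (huab : ∀ x ∈ u, ∀ y ∈ u, ⁅x, y⁆ = (0 : L))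
    (hcompl : IsCompl b.toSubmodule (LieSubmodule.toSubmodule u))
    (hskew : ∀ W ∈ b, ∀ X Y : L, B ⁅W, X⁆ Y = - B X ⁅W, Y⁆) :
    IsLieAbelian L := by
  refine isLieAbelian_of_codisjoint hcompl.codisjoint hbab huab fun W hW U hU => ?_
  exact lie_eq_zero_of_cyclic_of_skew B hpos hcyc (hskew W hW) (huab U hU _ (u.lie_mem hU))

/-- If a finite-dimensional real Lie algebra with a cyclic inner product is an
orthogonal direct sum `g = b ⊕ u` with `b` an abelian subalgebra, `u` an abelian ideal, and
`ad_B` skew-symmetric for every `B ∈ b`, then `g` is abelian. -/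
theorem flat_cyclic_is_abelian {L : Type*} [LieRing L] [LieAlgebra ℝ L]
    [FiniteDimensional ℝ L]
    (B : L →ₗ[ℝ] L →ₗ[ℝ] ℝ)
    (hsymm : ∀ x y : L, B x y = B y x)
    (hpos : ∀ x : L, x ≠ 0 → 0 < B x x)
    (hcyc : ∀ X Y Z : L, B ⁅X, Y⁆ Z + B ⁅Y, Z⁆ X + B ⁅Z, X⁆ Y = 0)
    (b : LieSubalgebra ℝ L) (u : LieIdeal ℝ L)
    (hbab : ∀ x ∈ b, ∀ y ∈ b, ⁅x, y⁆ = (0 : L))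
    (huab : ∀ x ∈ u, ∀ y ∈ u, ⁅x, y⁆ = (0 : L))
    (horth : ∀ x ∈ b, ∀ y ∈ u, B x y = 0)
    (hcompl : IsCompl b.toSubmodule (LieSubmodule.toSubmodule u))
    (hskew : ∀ W ∈ b, ∀ X Y : L, B ⁅W, X⁆ Y = - B X ⁅W, Y⁆) :
    IsLieAbelian L :=
  flat_cyclic_is_abelian_general B hpos hcyc b u hbab huab hcompl hskew
end

section
/- Let g be a finite-dimensional real semisimple Lie algebra with Killing form B and with a cyclic inner product ⟨·,·⟩, and let {e_i} be a B-orthonormal basis that is also orthogonal for ⟨·,·⟩, with ⟨e_i,e_i⟩ = ε_i λ_i where ε_i = B(e_i,e_i) = ±1. Then the structure constants c̄_{ij}^k = ε_k B([e_i,e_j],e_k) satisfy c̄_{ij}^k (λ_i + λ_j + λ_k) = 0 for all i < j < k. -/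
/-- For a semisimple real Lie algebra with a cyclic inner product, given a
`B`-orthonormal basis `{e_i}` (with `B(e_i,e_i) = ε_i = ±1`) which is orthogonal for the
inner product with `⟨e_i,e_i⟩ = ε_i λ_i`, the structure constants
`c̄_{ij}^k = ε_k B([e_i,e_j],e_k)` satisfy `c̄_{ij}^k (λ_i + λ_j + λ_k) = 0` for `i < j < k`. -/
theorem semisimple_cyclic_structure_constants {L : Type*} [LieRing L] [LieAlgebra ℝ L]
    [FiniteDimensional ℝ L] [LieAlgebra.IsSemisimple ℝ L]
    (ip : L →ₗ[ℝ] L →ₗ[ℝ] ℝ)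
    (hsymm : ∀ x y : L, ip x y = ip y x)
    (hpos : ∀ x : L, x ≠ 0 → 0 < ip x x)
    (hcyc : ∀ X Y Z : L, ip ⁅X, Y⁆ Z + ip ⁅Y, Z⁆ X + ip ⁅Z, X⁆ Y = 0)
    {n : ℕ} (e : Module.Basis (Fin n) ℝ L) (ε lam : Fin n → ℝ)
    (hε : ∀ i, ε i = 1 ∨ ε i = -1)
    (hB : ∀ i j, killingForm ℝ L (e i) (e j) = if i = j then ε i else 0)
    (hip : ∀ i j, ip (e i) (e j) = if i = j then ε i * lam i else 0) :
    ∀ i j k : Fin n, i < j → j < k →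
      (ε k * killingForm ℝ L ⁅e i, e j⁆ (e k)) * (lam i + lam j + lam k) = 0 := by
  have key : ∀ (x : L) (k : Fin n), ip x (e k) = killingForm ℝ L x (e k) * lam k := by
    intro x k
    conv_lhs => rw [← e.sum_repr x]
    conv_rhs => rw [← e.sum_repr x]
    simp only [map_sum, LinearMap.sum_apply, map_smul, LinearMap.smul_apply, smul_eq_mul,
      hip, hB, mul_ite, mul_zero, Finset.sum_ite_eq', Finset.mem_univ, if_true,
      Finset.sum_mul, ite_mul, zero_mul]
    ring
  have cyc : ∀ x y z : L, killingForm ℝ L ⁅x, y⁆ z = killingForm ℝ L ⁅z, x⁆ y := by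
    intro x y z
    rw [LieModule.traceForm_apply_lie_apply, LieModule.traceForm_comm,
      LieModule.traceForm_apply_lie_apply, LieModule.traceForm_comm]
  intro i j k _ _
  have h1 := hcyc (e i) (e j) (e k)
  rw [key _ k, key _ i, key _ j, cyc (e j) (e k) (e i), ← cyc (e i) (e j) (e k)] at h1
  linear_combination ε k * h1
end

section
/- A semisimple real Lie algebra with negative definite Killing form (i.e., of compact type) admits no cyclic inner product. -/
/-!
Let `κ` be the Killing form and `B` a cyclic inner product. As `κ` is definite, `B = κ(φ ·, ·)`
for an endomorphism `φ` which is self-adjoint for the inner product `-κ`, hence diagonalisable;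
its eigenvalues are negative because `B > 0 > κ`. Invariance of `κ` turns cyclicity of `B` into
`φ⁅x, y⁆ = -⁅φ x, y⁆ - ⁅x, φ y⁆`, so the bracket of eigenvectors for `μ` and `ν` is an
eigenvector for `-(μ + ν) > 0`, hence vanishes. Thus `L` is abelian and its Killing form is zero.
-/

open Module.End

namespace LinearMap.BilinForm

variable {R L : Type*} [CommRing R] [LieRing L] [LieAlgebra R L]

def IsCyclic (B : LinearMap.BilinForm R L) : Prop :=
  ∀ X Y Z : L, B ⁅X, Y⁆ Z + B ⁅Y, Z⁆ X + B ⁅Z, X⁆ Y = 0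

end LinearMap.BilinForm

namespace Module.End

section CommRing

variable {R L : Type*} [CommRing R] [LieRing L] [LieAlgebra R L]

def IsAntiDerivation (φ : Module.End R L) : Prop :=
  ∀ x y : L, φ ⁅x, y⁆ = -⁅φ x, y⁆ - ⁅x, φ y⁆

theorem IsAntiDerivation.lie_mem_eigenspace {φ : Module.End R L} (hφ : φ.IsAntiDerivation)
    {μ ν : R} {x y : L} (hx : x ∈ eigenspace φ μ) (hy : y ∈ eigenspace φ ν) :
    ⁅x, y⁆ ∈ eigenspace φ (-(μ + ν)) := by
  rw [mem_eigenspace_iff] at hx hy ⊢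
  rw [hφ, hx, hy, smul_lie, lie_smul]
  module

end CommRing

section Ordered

variable {R : Type*} [CommRing R] [LinearOrder R] [IsStrictOrderedRing R]

theorem IsAntiDerivation.isLieAbelian {L : Type*} [LieRing L] [LieAlgebra R L]
    {φ : Module.End R L} (hφ : φ.IsAntiDerivation) (hspan : ⨆ μ, eigenspace φ μ = ⊤)
    (hneg : ∀ μ, φ.HasEigenvalue μ → μ < 0) : IsLieAbelian L := by
  have hbr : ∀ μ ν, ∀ x ∈ eigenspace φ μ, ∀ y ∈ eigenspace φ ν, ⁅x, y⁆ = 0 := by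
    intro μ ν x hx y hy
    by_contra hxy
    have hx0 : x ≠ 0 := by rintro rfl; simp at hxy
    have hy0 : y ≠ 0 := by rintro rfl; simp at hxy
    have hμ := hneg μ (hasEigenvalue_of_hasEigenvector ⟨hx, hx0⟩)
    have hν := hneg ν (hasEigenvalue_of_hasEigenvector ⟨hy, hy0⟩)
    have hμν := hneg _ (hasEigenvalue_of_hasEigenvector ⟨hφ.lie_mem_eigenspace hx hy, hxy⟩)
    linarith
  have had : ∀ μ, ∀ x ∈ eigenspace φ μ, LieAlgebra.ad R L x = 0 := by
    intro μ x hx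
    rw [← LinearMap.ker_eq_top, eq_top_iff, ← hspan]
    exact iSup_le fun ν y hy ↦ LinearMap.mem_ker.mpr (hbr μ ν x hx y hy)
  have hker : LinearMap.ker (LieAlgebra.ad R L : L →ₗ[R] Module.End R L) = ⊤ :=
    eq_top_iff.mpr <| hspan ▸ iSup_le fun μ x hx ↦ LinearMap.mem_ker.mpr (had μ x hx)
  refine ⟨fun x y ↦ ?_⟩
  simpa using LinearMap.congr_fun₂ (LinearMap.ker_eq_top.mp hker) x y

theorem HasEigenvalue.lt_zero_of_apply_eq {V : Type*} [AddCommGroup V] [Module R V]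
    {κ B : LinearMap.BilinForm R V} {φ : Module.End R V} (hφ : ∀ x y, κ (φ x) y = B x y)
    (hκ : ∀ x, x ≠ 0 → κ x x < 0) (hB : ∀ x, x ≠ 0 → 0 < B x x) {μ : R}
    (hμ : φ.HasEigenvalue μ) : μ < 0 := by
  obtain ⟨x, hx⟩ := hμ.exists_hasEigenvector
  have hBx : B x x = μ * κ x x := by
    rw [← hφ, hx.apply_eq_smul, map_smul, LinearMap.smul_apply, smul_eq_mul]
  have hBpos := hB x hx.2
  have hκneg := hκ x hx.2
  nlinarith

end Ordered

end Module.End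

namespace LinearMap.BilinForm

theorem IsCyclic.isAntiDerivation {R L : Type*} [CommRing R] [LieRing L] [LieAlgebra R L]
    {κ B : LinearMap.BilinForm R L} (hB : B.IsCyclic) (hBsymm : B.IsSymm)
    (hκ : κ.SeparatingLeft) (hκinv : κ.lieInvariant L) {φ : Module.End R L}
    (hφ : ∀ x y, κ (φ x) y = B x y) : φ.IsAntiDerivation := by
  intro x y
  suffices φ ⁅x, y⁆ + ⁅φ x, y⁆ + ⁅x, φ y⁆ = 0 by linear_combination (norm := module) this
  refine hκ _ fun z ↦ ?_
  have h₁ : κ ⁅φ x, y⁆ z = B ⁅y, z⁆ x := by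
    rw [← lie_skew, map_neg, LinearMap.neg_apply, hκinv, neg_neg, hφ, hBsymm.eq]
  have h₂ : κ ⁅x, φ y⁆ z = B ⁅z, x⁆ y := by
    rw [hκinv, ← map_neg, lie_skew, hφ, hBsymm.eq]
  simp only [map_add, LinearMap.add_apply, hφ, h₁, h₂]
  exact hB x y z

theorem iSup_eigenspace_eq_top_of_isSelfAdjoint {V : Type*} [AddCommGroup V] [Module ℝ V]
    [FiniteDimensional ℝ V] {g : LinearMap.BilinForm ℝ V} (hg : g.IsSymm)
    (hpos : ∀ x, x ≠ 0 → 0 < g x x) {T : Module.End ℝ V} (hT : LinearMap.IsSelfAdjoint g T) :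
    ⨆ μ, eigenspace T μ = ⊤ := by
  let core : InnerProductSpace.Core ℝ V :=
    { inner := fun x y ↦ g x y
      conj_inner_symm := fun x y ↦ hg.eq y x
      re_inner_nonneg := fun x ↦ by
        rcases eq_or_ne x 0 with rfl | hx
        · simp
        · exact (hpos x hx).le
      add_left := fun x y z ↦ by simp
      smul_left := fun x y r ↦ by simp
      definite := fun x hx ↦ by
        by_contra hx0
        exact (hpos x hx0).ne' hx }
  let : NormedAddCommGroup V := core.toNormedAddCommGroup
  let : InnerProductSpace ℝ V := InnerProductSpace.ofCore core.toCore
  exact Submodule.orthogonal_eq_bot_iff.mp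
    (LinearMap.IsSymmetric.orthogonalComplement_iSup_eigenspaces_eq_bot (T := T) hT)

end LinearMap.BilinForm

open LinearMap.BilinForm in
theorem compact_type_no_cyclic_general {L : Type*} [LieRing L] [LieAlgebra ℝ L]
    [FiniteDimensional ℝ L] [Nontrivial L]
    (hneg : ∀ x : L, x ≠ 0 → killingForm ℝ L x x < 0) :
    ¬ ∃ B : L →ₗ[ℝ] L →ₗ[ℝ] ℝ,
        (∀ x y : L, B x y = B y x) ∧
        (∀ x : L, x ≠ 0 → 0 < B x x) ∧
        (∀ X Y Z : L, B ⁅X, Y⁆ Z + B ⁅Y, Z⁆ X + B ⁅Z, X⁆ Y = 0) := by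
  rintro ⟨B, hBsymm, hBpos, hBcyc⟩
  set κ := killingForm ℝ L
  have hκsymm : κ.IsSymm := ⟨LieModule.traceForm_comm ℝ L L⟩
  have hκ : κ.Nondegenerate :=
    (LieModule.traceForm_isSymm ℝ L L).isRefl.nondegenerate_iff_separatingLeft.mpr <|
      separatingLeft_of_anisotropic fun x hx ↦ by_contra fun hx0 ↦ (hneg x hx0).ne hx
  let φ : Module.End ℝ L := (κ.toDual hκ).symm.toLinearMap ∘ₗ B
  have hφ : ∀ x y, κ (φ x) y = B x y := fun x y ↦ κ.apply_toDual_symm_apply (hB := hκ) (B x) y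
  have hanti : φ.IsAntiDerivation :=
    IsCyclic.isAntiDerivation hBcyc ⟨hBsymm⟩ hκ.1 (LieModule.traceForm_lieInvariant ℝ L L) hφ
  have hφself : LinearMap.IsSelfAdjoint (-κ) φ := fun x y ↦ by
    simp only [LinearMap.neg_apply, hφ, hBsymm x y, hκsymm.eq x]
  have hspan : ⨆ μ, eigenspace φ μ = ⊤ :=
    iSup_eigenspace_eq_top_of_isSelfAdjoint hκsymm.neg (fun x hx ↦ by simpa using hneg x hx) hφself
  have : IsLieAbelian L := hanti.isLieAbelian hspan fun μ hμ ↦ hμ.lt_zero_of_apply_eq hφ hneg hBpos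
  obtain ⟨x, hx⟩ := exists_ne (0 : L)
  simpa [κ, LieModule.traceForm_eq_zero_of_isTrivial] using hneg x hx

/-- A (nontrivial) semisimple real Lie algebra of compact type, i.e. with
negative definite Killing form, admits no cyclic inner product. -/
theorem compact_type_no_cyclic {L : Type*} [LieRing L] [LieAlgebra ℝ L]
    [FiniteDimensional ℝ L] [Nontrivial L] [LieAlgebra.IsSemisimple ℝ L]
    (hneg : ∀ x : L, x ≠ 0 → killingForm ℝ L x x < 0) :
    ¬ ∃ B : L →ₗ[ℝ] L →ₗ[ℝ] ℝ,
        (∀ x y : L, B x y = B y x) ∧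
        (∀ x : L, x ≠ 0 → 0 < B x x) ∧
        (∀ X Y Z : L, B ⁅X, Y⁆ Z + B ⁅Y, Z⁆ X + B ⁅Z, X⁆ Y = 0) :=
  compact_type_no_cyclic_general hneg
end

section
/- Let g₁ and g₂ be real Lie algebras with inner products ⟨·,·⟩₁ and ⟨·,·⟩₂, and let π: g₁ → Der(g₂) be a Lie algebra homomorphism into the derivations of g₂. Equip the semidirect sum g₁ ⋉_π g₂ with the product inner product. Then this inner product is cyclic if and only if ⟨·,·⟩₁ and ⟨·,·⟩₂ are cyclic and for each X₁ ∈ g₁ the derivation π(X₁) is self-adjoint with respect to ⟨·,·⟩₂. -/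
/-! The cyclic sum of the product inner product splits into the cyclic sums of `B₁` and `B₂` plus,
for each `g₁`-component, the antisymmetrisation of `B₂ (π X ·) ·` in the two remaining
`g₂`-components. Evaluating on triples with a single nonzero component in each slot isolates the
three pieces. -/

/-- The bracket of the semidirect sum `g₁ ⋉_π g₂`. -/
def sdBracket {L₁ L₂ : Type*} [LieRing L₁] [LieAlgebra ℝ L₁] [LieRing L₂] [LieAlgebra ℝ L₂]
    (π : L₁ →ₗ[ℝ] L₂ →ₗ[ℝ] L₂) (p q : L₁ × L₂) : L₁ × L₂ :=
  (⁅p.1, q.1⁆, ⁅p.2, q.2⁆ + π p.1 q.2 - π q.1 p.2)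

/-- The product inner product on `g₁ × g₂`. -/
def sdInner {L₁ L₂ : Type*} [LieRing L₁] [LieAlgebra ℝ L₁] [LieRing L₂] [LieAlgebra ℝ L₂]
    (B₁ : L₁ →ₗ[ℝ] L₁ →ₗ[ℝ] ℝ) (B₂ : L₂ →ₗ[ℝ] L₂ →ₗ[ℝ] ℝ) (p q : L₁ × L₂) : ℝ :=
  B₁ p.1 q.1 + B₂ p.2 q.2

def cyclicSum {M R : Type*} [Add R] (bracket : M → M → M) (B : M → M → R) (x y z : M) : R :=
  B (bracket x y) z + B (bracket y z) x + B (bracket z x) y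

def IsCyclicForm {M R : Type*} [Add R] [Zero R] (bracket : M → M → M) (B : M → M → R) : Prop :=
  ∀ x y z, cyclicSum bracket B x y z = 0

section SemidirectSum

variable {L₁ L₂ : Type*} [LieRing L₁] [LieAlgebra ℝ L₁] [LieRing L₂] [LieAlgebra ℝ L₂]
  (B₁ : L₁ →ₗ[ℝ] L₁ →ₗ[ℝ] ℝ) (B₂ : L₂ →ₗ[ℝ] L₂ →ₗ[ℝ] ℝ) (π : L₁ →ₗ[ℝ] L₂ →ₗ[ℝ] L₂)

theorem cyclicSum_sdBracket (p q r : L₁ × L₂) :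
    cyclicSum (sdBracket π) (sdInner B₁ B₂) p q r =
      cyclicSum (⁅·, ·⁆) (B₁ · ·) p.1 q.1 r.1 + cyclicSum (⁅·, ·⁆) (B₂ · ·) p.2 q.2 r.2 +
        (B₂ (π p.1 q.2) r.2 - B₂ (π p.1 r.2) q.2) + (B₂ (π q.1 r.2) p.2 - B₂ (π q.1 p.2) r.2) +
        (B₂ (π r.1 p.2) q.2 - B₂ (π r.1 q.2) p.2) := by
  simp only [cyclicSum, sdInner, sdBracket, map_add, map_sub, LinearMap.add_apply,
    LinearMap.sub_apply]
  ring

variable {B₁ B₂ π}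

theorem IsCyclicForm.of_sdBracket_fst (h : IsCyclicForm (sdBracket π) (sdInner B₁ B₂)) :
    IsCyclicForm (⁅·, ·⁆) (B₁ · ·) := fun X Y Z => by
  simpa [cyclicSum] using (cyclicSum_sdBracket B₁ B₂ π (X, 0) (Y, 0) (Z, 0)).symm.trans (h _ _ _)

theorem IsCyclicForm.of_sdBracket_snd (h : IsCyclicForm (sdBracket π) (sdInner B₁ B₂)) :
    IsCyclicForm (⁅·, ·⁆) (B₂ · ·) := fun x y z => by
  simpa [cyclicSum] using (cyclicSum_sdBracket B₁ B₂ π (0, x) (0, y) (0, z)).symm.trans (h _ _ _)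

theorem IsCyclicForm.isSelfAdjoint_of_sdBracket (hB₂ : LinearMap.BilinForm.IsSymm B₂)
    (h : IsCyclicForm (sdBracket π) (sdInner B₁ B₂)) (X : L₁) : B₂.IsSelfAdjoint (π X) :=
  fun a b => by
    have hsum := (cyclicSum_sdBracket B₁ B₂ π (X, 0) (0, a) (0, b)).symm.trans (h _ _ _)
    simp only [cyclicSum, lie_zero, zero_lie, map_zero, LinearMap.zero_apply, zero_add,
      add_zero, sub_zero] at hsum
    rw [hB₂.eq a]
    linarith

theorem IsCyclicForm.sdBracket (hB₂ : LinearMap.BilinForm.IsSymm B₂)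
    (h₁ : IsCyclicForm (⁅·, ·⁆) (B₁ · ·)) (h₂ : IsCyclicForm (⁅·, ·⁆) (B₂ · ·))
    (hπ : ∀ X, B₂.IsSelfAdjoint (π X)) : IsCyclicForm (sdBracket π) (sdInner B₁ B₂) := by
  have hskew (X : L₁) (y z : L₂) : B₂ (π X y) z - B₂ (π X z) y = 0 := by
    rw [hπ X y z, hB₂.eq, sub_self]
  intro p q r
  rw [cyclicSum_sdBracket, h₁, h₂, hskew, hskew, hskew]
  norm_num

end SemidirectSum

theorem semidirect_cyclic_iff_general {L₁ L₂ : Type*}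
    [LieRing L₁] [LieAlgebra ℝ L₁] [LieRing L₂] [LieAlgebra ℝ L₂]
    (B₁ : L₁ →ₗ[ℝ] L₁ →ₗ[ℝ] ℝ) (B₂ : L₂ →ₗ[ℝ] L₂ →ₗ[ℝ] ℝ)
    (h₂symm : ∀ x y : L₂, B₂ x y = B₂ y x)
    (π : L₁ →ₗ[ℝ] L₂ →ₗ[ℝ] L₂) :
    (∀ p q r : L₁ × L₂,
        sdInner B₁ B₂ (sdBracket π p q) r + sdInner B₁ B₂ (sdBracket π q r) p +
          sdInner B₁ B₂ (sdBracket π r p) q = 0) ↔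
      ((∀ X Y Z : L₁, B₁ ⁅X, Y⁆ Z + B₁ ⁅Y, Z⁆ X + B₁ ⁅Z, X⁆ Y = 0) ∧
        (∀ X Y Z : L₂, B₂ ⁅X, Y⁆ Z + B₂ ⁅Y, Z⁆ X + B₂ ⁅Z, X⁆ Y = 0) ∧
        (∀ (X : L₁) (a b : L₂), B₂ (π X a) b = B₂ a (π X b))) := by
  have hB₂ : LinearMap.BilinForm.IsSymm B₂ := ⟨h₂symm⟩
  change IsCyclicForm (sdBracket π) (sdInner B₁ B₂) ↔
    IsCyclicForm (⁅·, ·⁆) (B₁ · ·) ∧ IsCyclicForm (⁅·, ·⁆) (B₂ · ·) ∧ ∀ X, B₂.IsSelfAdjoint (π X)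
  exact ⟨fun h => ⟨h.of_sdBracket_fst, h.of_sdBracket_snd, h.isSelfAdjoint_of_sdBracket hB₂⟩,
    fun ⟨h₁, h₂, hπ⟩ => h₁.sdBracket hB₂ h₂ hπ⟩

/-- The product inner product on the semidirect sum `g₁ ⋉_π g₂` is cyclic iff
both inner products are cyclic and each `π(X₁)` is self-adjoint w.r.t. `⟨·,·⟩₂`. -/
theorem semidirect_cyclic_iff {L₁ L₂ : Type*}
    [LieRing L₁] [LieAlgebra ℝ L₁] [LieRing L₂] [LieAlgebra ℝ L₂]
    (B₁ : L₁ →ₗ[ℝ] L₁ →ₗ[ℝ] ℝ) (B₂ : L₂ →ₗ[ℝ] L₂ →ₗ[ℝ] ℝ)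
    (h₁symm : ∀ x y : L₁, B₁ x y = B₁ y x)
    (h₁pos : ∀ x : L₁, x ≠ 0 → 0 < B₁ x x)
    (h₂symm : ∀ x y : L₂, B₂ x y = B₂ y x)
    (h₂pos : ∀ x : L₂, x ≠ 0 → 0 < B₂ x x)
    (π : L₁ →ₗ[ℝ] L₂ →ₗ[ℝ] L₂)
    (hder : ∀ (X : L₁) (a b : L₂), π X ⁅a, b⁆ = ⁅π X a, b⁆ + ⁅a, π X b⁆)
    (hhom : ∀ (X Y : L₁) (a : L₂), π ⁅X, Y⁆ a = π X (π Y a) - π Y (π X a)) :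
    (∀ p q r : L₁ × L₂,
        sdInner B₁ B₂ (sdBracket π p q) r + sdInner B₁ B₂ (sdBracket π q r) p +
          sdInner B₁ B₂ (sdBracket π r p) q = 0) ↔
      ((∀ X Y Z : L₁, B₁ ⁅X, Y⁆ Z + B₁ ⁅Y, Z⁆ X + B₁ ⁅Z, X⁆ Y = 0) ∧
        (∀ X Y Z : L₂, B₂ ⁅X, Y⁆ Z + B₂ ⁅Y, Z⁆ X + B₂ ⁅Z, X⁆ Y = 0) ∧
        (∀ (X : L₁) (a b : L₂), B₂ (π X a) b = B₂ a (π X b))) :=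
  semidirect_cyclic_iff_general B₁ B₂ h₂symm π
end

section
/- Let g be an n-dimensional real solvable Lie algebra with inner product ⟨·,·⟩ and an orthonormal basis {e₁,…,e_n} adapted to a chain of ideals g_{n−i} = span{e₁,…,e_i} with each g_r an ideal of codimension 1 in g_{r−1}. With structure constants c_{ij}^k = ⟨[e_i,e_j], e_k⟩, the inner product is cyclic if and only if c_{ik}^j = c_{jk}^i for all 1 ≤ i < j < k ≤ n. -/
/-!
Both sides are statements about the trilinear form `ip ⁅x, y⁆ z`. Its cyclic sum is again
trilinear, so it vanishes identically as soon as it vanishes on triples of basis vectors. On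
basis vectors the cyclic sum `c i j k + c j k i + c k i j` is invariant under rotation and changes
sign under a transposition, by antisymmetry of the bracket, so it suffices to test it on strictly
increasing triples `i < j < k`. There adaptedness kills `c i j k`, and what remains is
`c j k i - c i k j`.
-/

namespace LinearMap

variable {R M N : Type*} [CommRing R] [AddCommGroup M] [Module R M] [AddCommGroup N] [Module R N]

def rotate₃ (S : M →ₗ[R] M →ₗ[R] M →ₗ[R] N) : M →ₗ[R] M →ₗ[R] M →ₗ[R] N :=
  lflip.toLinearMap ∘ₗ S.flip

@[simp]
theorem rotate₃_apply (S : M →ₗ[R] M →ₗ[R] M →ₗ[R] N) (x y z : M) :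
    S.rotate₃ x y z = S z x y := rfl

theorem ext_basis₃ {ι : Type*} (b : Module.Basis ι R M) {S T : M →ₗ[R] M →ₗ[R] M →ₗ[R] N}
    (h : ∀ i j k, S (b i) (b j) (b k) = T (b i) (b j) (b k)) : S = T :=
  ext_basis b b fun i j => b.ext fun k => h i j k

end LinearMap

namespace LieAlgebra

variable {R L M : Type*} [CommRing R] [LieRing L] [LieAlgebra R L] [AddCommGroup M] [Module R M]

def cyclicForm (ip : L →ₗ[R] L →ₗ[R] M) : L →ₗ[R] L →ₗ[R] L →ₗ[R] M :=
  let T := (ad R L : L →ₗ[R] Module.End R L).compr₂ ip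
  T + T.rotate₃.rotate₃ + T.rotate₃

@[simp]
theorem cyclicForm_apply (ip : L →ₗ[R] L →ₗ[R] M) (x y z : L) :
    cyclicForm ip x y z = ip ⁅x, y⁆ z + ip ⁅y, z⁆ x + ip ⁅z, x⁆ y := rfl

theorem forall_cyclic_iff_basis {ι : Type*} (b : Module.Basis ι R L) (ip : L →ₗ[R] L →ₗ[R] M) :
    (∀ x y z : L, ip ⁅x, y⁆ z + ip ⁅y, z⁆ x + ip ⁅z, x⁆ y = 0) ↔
      ∀ i j k, ip ⁅b i, b j⁆ (b k) + ip ⁅b j, b k⁆ (b i) + ip ⁅b k, b i⁆ (b j) = 0 := by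
  refine ⟨fun h i j k => h _ _ _, fun h x y z => ?_⟩
  have hzero : cyclicForm ip = 0 := LinearMap.ext_basis₃ b fun i j k => h i j k
  simpa using congr($hzero x y z)

end LieAlgebra

section StructureConstants

variable {ι G : Type*} [LinearOrder ι] [AddCommGroup G]

theorem eq_zero_of_alternating_of_forall_lt (s : ι → ι → ι → G)
    (hrot : ∀ i j k, s i j k = s j k i) (hswap : ∀ i j k, s j i k = -s i j k)
    (hdiag : ∀ i k, s i i k = 0) (h : ∀ i j k, i < j → j < k → s i j k = 0) (i j k : ι) :
    s i j k = 0 := by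
  rcases lt_trichotomy i j with hij | rfl | hij
  · rcases lt_trichotomy j k with hjk | rfl | hjk
    · exact h i j k hij hjk
    · rw [hrot, hdiag]
    · rcases lt_trichotomy i k with hik | rfl | hik
      · rw [hrot, hrot, ← neg_eq_zero, ← hswap, h i k j hik hjk]
      · rw [hrot, hrot, hdiag]
      · rw [hrot, hrot, h k i j hik hij]
  · exact hdiag i k
  · rcases lt_trichotomy j k with hjk | rfl | hjk
    · rcases lt_trichotomy i k with hik | rfl | hik
      · rw [← neg_eq_zero, ← hswap, h j i k hij hik]
      · rw [hrot, hrot, hdiag]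
      · rw [hrot, h j k i hjk hik]
    · rw [hrot, hdiag]
    · rw [← neg_eq_zero, ← hswap, ← hrot, h k j i hjk hij]

theorem forall_cyclic_sum_eq_zero_iff_of_adapted (c : ι → ι → ι → G)
    (hanti : ∀ i j k, c i j k = -c j i k) (hdiag : ∀ i k, c i i k = 0)
    (hadapted : ∀ i j k, max i j ≤ k → c i j k = 0) :
    (∀ i j k, c i j k + c j k i + c k i j = 0) ↔ ∀ i j k, i < j → j < k → c i k j = c j k i := by
  have hsorted : ∀ i j k, i < j → j < k → c i j k + c j k i + c k i j = c j k i - c i k j := by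
    intro i j k hij hjk
    rw [hadapted i j k (max_le (hij.trans hjk).le hjk.le), hanti k i]
    abel
  constructor
  · intro h i j k hij hjk
    rw [eq_comm, ← sub_eq_zero, ← hsorted i j k hij hjk, h]
  · intro h
    refine eq_zero_of_alternating_of_forall_lt _ (fun i j k => by abel) (fun i j k => ?_)
      (fun i k => ?_) fun i j k hij hjk => by rw [hsorted i j k hij hjk, h i j k hij hjk, sub_self]
    · rw [hanti j i, hanti i k, hanti k j]
      abel
    · rw [hdiag, hanti k i]
      abel

end StructureConstants

theorem solvable_cyclic_iff_structure_constants_general {L : Type*} [LieRing L] [LieAlgebra ℝ L]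
    {n : ℕ}
    (ip : L →ₗ[ℝ] L →ₗ[ℝ] ℝ)
    (e : Module.Basis (Fin n) ℝ L)
    (c : Fin n → Fin n → Fin n → ℝ)
    (hc : ∀ i j k, c i j k = ip ⁅e i, e j⁆ (e k))
    (hadapted : ∀ i j k : Fin n, max i j ≤ k → c i j k = 0) :
    (∀ X Y Z : L, ip ⁅X, Y⁆ Z + ip ⁅Y, Z⁆ X + ip ⁅Z, X⁆ Y = 0) ↔
      (∀ i j k : Fin n, i < j → j < k → c i k j = c j k i) := by
  have hanti : ∀ i j k, c i j k = -c j i k := fun i j k => by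
    rw [hc, hc, ← lie_skew (e i), map_neg, LinearMap.neg_apply]
  have hdiag : ∀ i k, c i i k = 0 := fun i k => by rw [hc, lie_self, map_zero, LinearMap.zero_apply]
  rw [LieAlgebra.forall_cyclic_iff_basis e ip]
  simp only [← hc]
  exact forall_cyclic_sum_eq_zero_iff_of_adapted c hanti hdiag hadapted

/-- For a solvable metric Lie algebra with an adapted orthonormal basis
(so that `c_{ij}^k = 0` whenever `k ≥ max{i,j}`), the inner product is cyclic iff
`c_{ik}^j = c_{jk}^i` for all `i < j < k`. -/
theorem solvable_cyclic_iff_structure_constants {L : Type*} [LieRing L] [LieAlgebra ℝ L]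
    [LieAlgebra.IsSolvable L] {n : ℕ}
    (ip : L →ₗ[ℝ] L →ₗ[ℝ] ℝ)
    (hsymm : ∀ x y : L, ip x y = ip y x)
    (hpos : ∀ x : L, x ≠ 0 → 0 < ip x x)
    (e : Module.Basis (Fin n) ℝ L)
    (horth : ∀ i j, ip (e i) (e j) = if i = j then 1 else 0)
    (c : Fin n → Fin n → Fin n → ℝ)
    (hc : ∀ i j k, c i j k = ip ⁅e i, e j⁆ (e k))
    (hadapted : ∀ i j k : Fin n, max i j ≤ k → c i j k = 0) :
    (∀ X Y Z : L, ip ⁅X, Y⁆ Z + ip ⁅Y, Z⁆ X + ip ⁅Z, X⁆ Y = 0) ↔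
      (∀ i j k : Fin n, i < j → j < k → c i k j = c j k i) :=
  solvable_cyclic_iff_structure_constants_general ip e c hc hadapted
end

section
/- Let g be a nonunimodular finite-dimensional real Lie algebra with a cyclic inner product, let u = {X ∈ g : tr(ad_X) = 0} be its unimodular kernel, and let W be a unit vector orthogonal to u. Then the restriction of ad_W to u is self-adjoint with respect to the inner product. -/
attribute [local instance 100] LieRing.ofAssociativeRing

/-! For a symmetric cyclic form, the cyclic identity says that `B ⁅W, X⁆ Y - B X ⁅W, Y⁆`
equals `-B W ⁅X, Y⁆`. Every bracket `⁅X, Y⁆` lies in the unimodular kernel, since `ad ⁅X, Y⁆` is a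
commutator of endomorphisms and hence traceless; so this defect vanishes when `W ⊥ u`. -/

theorem LieAlgebra.trace_ad_lie_eq_zero {R L : Type*} [CommRing R] [LieRing L] [LieAlgebra R L]
    (X Y : L) : LinearMap.trace R L (LieAlgebra.ad R L ⁅X, Y⁆) = 0 := by
  rw [LieHom.map_lie, LinearMap.trace_lie]

theorem LinearMap.apply_lie_apply_of_cyclic {R L : Type*} [CommRing R] [LieRing L]
    [LieAlgebra R L] {B : L →ₗ[R] L →ₗ[R] R} (hsymm : ∀ x y : L, B x y = B y x)
    (hcyc : ∀ X Y Z : L, B ⁅X, Y⁆ Z + B ⁅Y, Z⁆ X + B ⁅Z, X⁆ Y = 0) (W X Y : L) :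
    B ⁅W, X⁆ Y = B X ⁅W, Y⁆ - B W ⁅X, Y⁆ := by
  have hYW : B ⁅Y, W⁆ X = -B X ⁅W, Y⁆ := by
    rw [← lie_skew Y W, map_neg, LinearMap.neg_apply, hsymm]
  have := hcyc W X Y
  rw [hYW, hsymm ⁅X, Y⁆ W] at this
  linear_combination this

theorem adW_selfadjoint_on_unimodular_kernel_general {L : Type*} [LieRing L] [LieAlgebra ℝ L]
    (B : L →ₗ[ℝ] L →ₗ[ℝ] ℝ)
    (hsymm : ∀ x y : L, B x y = B y x)
    (hcyc : ∀ X Y Z : L, B ⁅X, Y⁆ Z + B ⁅Y, Z⁆ X + B ⁅Z, X⁆ Y = 0)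
    (W : L)
    (hWorth : ∀ X : L, LinearMap.trace ℝ L (LieAlgebra.ad ℝ L X) = 0 → B W X = 0) :
    ∀ X Y : L, LinearMap.trace ℝ L (LieAlgebra.ad ℝ L X) = 0 →
      LinearMap.trace ℝ L (LieAlgebra.ad ℝ L Y) = 0 →
      B ⁅W, X⁆ Y = B X ⁅W, Y⁆ := by
  intro X Y _ _
  have hW_lie : B W ⁅X, Y⁆ = 0 := hWorth _ (LieAlgebra.trace_ad_lie_eq_zero X Y)
  rw [LinearMap.apply_lie_apply_of_cyclic hsymm hcyc, hW_lie, sub_zero]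

/-- In a nonunimodular finite-dimensional real Lie algebra with a cyclic inner
product, if `W` is a unit vector orthogonal to the unimodular kernel
`u = {X : tr(ad X) = 0}`, then `ad W` restricted to `u` is self-adjoint. -/
theorem adW_selfadjoint_on_unimodular_kernel {L : Type*} [LieRing L] [LieAlgebra ℝ L]
    [FiniteDimensional ℝ L]
    (B : L →ₗ[ℝ] L →ₗ[ℝ] ℝ)
    (hsymm : ∀ x y : L, B x y = B y x)
    (hpos : ∀ x : L, x ≠ 0 → 0 < B x x)
    (hcyc : ∀ X Y Z : L, B ⁅X, Y⁆ Z + B ⁅Y, Z⁆ X + B ⁅Z, X⁆ Y = 0)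
    (hnu : ∃ X : L, LinearMap.trace ℝ L (LieAlgebra.ad ℝ L X) ≠ 0)
    (W : L) (hW : B W W = 1)
    (hWorth : ∀ X : L, LinearMap.trace ℝ L (LieAlgebra.ad ℝ L X) = 0 → B W X = 0) :
    ∀ X Y : L, LinearMap.trace ℝ L (LieAlgebra.ad ℝ L X) = 0 →
      LinearMap.trace ℝ L (LieAlgebra.ad ℝ L Y) = 0 →
      B ⁅W, X⁆ Y = B X ⁅W, Y⁆ :=
  adW_selfadjoint_on_unimodular_kernel_general B hsymm hcyc W hWorth
end

section
/- Let g be a 3-dimensional real unimodular Lie algebra with an inner product and an orthonormal basis {e₁,e₂,e₃} satisfying [e₂,e₃] = λ₁e₁, [e₃,e₁] = λ₂e₂, [e₁,e₂] = λ₃e₃. Then the inner product is cyclic if and only if λ₁ + λ₂ + λ₃ = 0. -/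
/-!
The cyclic sum `⟨[X,Y],Z⟩ + ⟨[Y,Z],X⟩ + ⟨[Z,X],Y⟩` is trilinear and, by antisymmetry of the
bracket alone, alternating in `(X, Y, Z)`. On a 3-dimensional space an alternating trilinear form
is a multiple of the determinant, so it vanishes iff it vanishes on `(e₁, e₂, e₃)`, where by
orthonormality it equals `λ₁ + λ₂ + λ₃`.
-/

namespace LinearMap

variable {R L : Type*} [CommRing R] [LieRing L] [LieAlgebra R L]

def lieCyclicSum (B : L →ₗ[R] L →ₗ[R] R) : L [⋀^Fin 3]→ₗ[R] R where
  toFun v := B ⁅v 0, v 1⁆ (v 2) + B ⁅v 1, v 2⁆ (v 0) + B ⁅v 2, v 0⁆ (v 1)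
  map_update_add' v i x y := by
    -- `Function.update` uses an arbitrary `DecidableEq` instance; replace it by the computable one
    obtain rfl : ‹DecidableEq (Fin 3)› = instDecidableEqFin 3 := Subsingleton.elim _ _
    fin_cases i <;> simp [add_lie, lie_add] <;> ring
  map_update_smul' v i c x := by
    obtain rfl : ‹DecidableEq (Fin 3)› = instDecidableEqFin 3 := Subsingleton.elim _ _
    fin_cases i <;> simp [smul_lie, lie_smul] <;> ring
  map_eq_zero_of_eq' v i j hv hij := by
    have skew (x y z : L) : B ⁅x, y⁆ z + B ⁅y, x⁆ z = 0 := by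
      rw [← lie_skew y x, map_neg, neg_apply, add_neg_cancel]
    fin_cases i <;> fin_cases j <;> simp at hij hv <;> simp [hv, skew, add_comm (B _ _)]

@[simp]
theorem lieCyclicSum_apply (B : L →ₗ[R] L →ₗ[R] R) (v : Fin 3 → L) :
    B.lieCyclicSum v = B ⁅v 0, v 1⁆ (v 2) + B ⁅v 1, v 2⁆ (v 0) + B ⁅v 2, v 0⁆ (v 1) :=
  rfl

theorem lieCyclicSum_eq_zero_iff (B : L →ₗ[R] L →ₗ[R] R) :
    B.lieCyclicSum = 0 ↔ ∀ X Y Z : L, B ⁅X, Y⁆ Z + B ⁅Y, Z⁆ X + B ⁅Z, X⁆ Y = 0 := by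
  refine ⟨fun h X Y Z ↦ ?_, fun h ↦ AlternatingMap.ext fun v ↦ h (v 0) (v 1) (v 2)⟩
  simpa using congr($h ![X, Y, Z])

theorem lieCyclicSum_eq_zero_iff_of_basis (B : L →ₗ[R] L →ₗ[R] R)
    (e : Module.Basis (Fin 3) R L) : B.lieCyclicSum = 0 ↔ B.lieCyclicSum e = 0 := by
  refine ⟨fun h ↦ by rw [h, AlternatingMap.zero_apply], fun h ↦ ?_⟩
  rw [B.lieCyclicSum.eq_smul_basis_det e, h, zero_smul]

theorem lieCyclicSum_eq_of_lie_eq_smul (B : L →ₗ[R] L →ₗ[R] R) {e : Fin 3 → L} {lam : Fin 3 → R}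
    (h23 : ⁅e 1, e 2⁆ = lam 0 • e 0) (h31 : ⁅e 2, e 0⁆ = lam 1 • e 1)
    (h12 : ⁅e 0, e 1⁆ = lam 2 • e 2) :
    B.lieCyclicSum e = lam 0 * B (e 0) (e 0) + lam 1 * B (e 1) (e 1) + lam 2 * B (e 2) (e 2) := by
  simp only [lieCyclicSum_apply, h23, h31, h12, map_smul, smul_apply, smul_eq_mul]
  ring

end LinearMap

theorem three_dim_unimodular_cyclic_iff_general {L : Type*} [LieRing L] [LieAlgebra ℝ L]
    (ip : L →ₗ[ℝ] L →ₗ[ℝ] ℝ)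
    (e : Module.Basis (Fin 3) ℝ L)
    (horth : ∀ i j, ip (e i) (e j) = if i = j then 1 else 0)
    (lam : Fin 3 → ℝ)
    (h23 : ⁅e 1, e 2⁆ = lam 0 • e 0)
    (h31 : ⁅e 2, e 0⁆ = lam 1 • e 1)
    (h12 : ⁅e 0, e 1⁆ = lam 2 • e 2) :
    (∀ X Y Z : L, ip ⁅X, Y⁆ Z + ip ⁅Y, Z⁆ X + ip ⁅Z, X⁆ Y = 0) ↔
      lam 0 + lam 1 + lam 2 = 0 := by
  rw [← ip.lieCyclicSum_eq_zero_iff, ip.lieCyclicSum_eq_zero_iff_of_basis e,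
    ip.lieCyclicSum_eq_of_lie_eq_smul h23 h31 h12]
  simp [horth]

/-- For a 3-dimensional real unimodular Lie algebra with orthonormal basis
`{e₁,e₂,e₃}` satisfying `[e₂,e₃] = λ₁e₁`, `[e₃,e₁] = λ₂e₂`, `[e₁,e₂] = λ₃e₃`, the inner
product is cyclic iff `λ₁ + λ₂ + λ₃ = 0`. -/
theorem three_dim_unimodular_cyclic_iff {L : Type*} [LieRing L] [LieAlgebra ℝ L]
    [FiniteDimensional ℝ L]
    (ip : L →ₗ[ℝ] L →ₗ[ℝ] ℝ)
    (hsymm : ∀ x y : L, ip x y = ip y x)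
    (hpos : ∀ x : L, x ≠ 0 → 0 < ip x x)
    (e : Module.Basis (Fin 3) ℝ L)
    (horth : ∀ i j, ip (e i) (e j) = if i = j then 1 else 0)
    (lam : Fin 3 → ℝ)
    (h23 : ⁅e 1, e 2⁆ = lam 0 • e 0)
    (h31 : ⁅e 2, e 0⁆ = lam 1 • e 1)
    (h12 : ⁅e 0, e 1⁆ = lam 2 • e 2) :
    (∀ X Y Z : L, ip ⁅X, Y⁆ Z + ip ⁅Y, Z⁆ X + ip ⁅Z, X⁆ Y = 0) ↔
      lam 0 + lam 1 + lam 2 = 0 :=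
  three_dim_unimodular_cyclic_iff_general ip e horth lam h23 h31 h12
end

section
/- Let g be the 4-dimensional real Lie algebra with orthonormal basis {e₀,e₁,e₂,e₃} where u = span{e₁,e₂,e₃} is an ideal isomorphic to sl(2,ℝ) with [e₂,e₃] = λ₁e₁, [e₃,e₁] = λ₂e₂, [e₁,e₂] = λ₃e₃, λ₁λ₂λ₃ ≠ 0, λ₁+λ₂+λ₃ = 0, and ad_{e₀} acts on u as a self-adjoint derivation. Then ad_{e₀} = 0 on u, so g is the direct sum ℝ ⊕ sl(2,ℝ) and is unimodular. -/
/-!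
Let `d_pq` be the `p`-th coordinate of `ad e₀ (e_q)`; self-adjointness makes `d` symmetric on
`u`. Reading off coordinates in the Leibniz rule for `[e_j, e_k] = λ_i e_i` (`i, j, k` cyclic)
gives `λ_i d_ii = λ_i (d_jj + d_kk)` and `λ_i d_ji = -λ_j d_ij`. With `d_ij = d_ji` the latter
says `λ_k d_ij = 0`, and the cyclic diagonal relations force `d_ii = 0`, so `e₀` is central.
Since every `e_i` is a multiple of a bracket and the trace of `ad` kills brackets, `ad` is
traceless.
-/

open Module

section

variable {R M ι : Type*} [CommSemiring R] [AddCommMonoid M] [Module R M] [DecidableEq ι]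
  {ip : M →ₗ[R] M →ₗ[R] R} {e : Basis ι R M}

theorem apply_basis_left_eq_repr (horth : ∀ i j, ip (e i) (e j) = if i = j then 1 else 0)
    (i : ι) (x : M) : ip (e i) x = e.repr x i := by
  have : ip (e i) = e.coord i := e.ext fun j => by simp [horth, Finsupp.single_apply, eq_comm]
  rw [this, e.coord_apply]

theorem apply_basis_right_eq_repr (horth : ∀ i j, ip (e i) (e j) = if i = j then 1 else 0)
    (i : ι) (x : M) : ip x (e i) = e.repr x i := by
  have : ip.flip (e i) = e.coord i := e.ext fun j => by simp [horth, Finsupp.single_apply]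
  rw [← LinearMap.flip_apply, this, e.coord_apply]

end

section

variable {R M ι : Type*} [CommRing R] [AddCommGroup M] [Module R M] {e : Basis ι R M}

theorem Module.Basis.eq_sum_repr_of_mem_span_triple {i j k : ι} (hij : i ≠ j) (hjk : j ≠ k)
    (hki : k ≠ i) {x : M} (hx : x ∈ Submodule.span R {e i, e j, e k}) :
    x = e.repr x i • e i + e.repr x j • e j + e.repr x k • e k := by
  obtain ⟨a, y, hy, rfl⟩ := Submodule.mem_span_insert.mp hx
  obtain ⟨b, c, rfl⟩ := Submodule.mem_span_pair.mp hy
  simp [hij, hjk, hki, hij.symm, hjk.symm, hki.symm]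
  abel

end

namespace LieDerivation

variable {R L ι : Type*} [CommRing R] [LieRing L] [LieAlgebra R L] {e : Basis ι R L}
  {i j k : ι} {a b c : R}

theorem repr_apply_of_cyclic_lie (D : LieDerivation R L L) (hij : i ≠ j) (hjk : j ≠ k)
    (hki : k ≠ i) (hjk_lie : ⁅e j, e k⁆ = a • e i) (hki_lie : ⁅e k, e i⁆ = b • e j)
    (hij_lie : ⁅e i, e j⁆ = c • e k)
    (hD : ∀ x ∈ Submodule.span R {e i, e j, e k}, D x ∈ Submodule.span R {e i, e j, e k}) :
    a * e.repr (D (e i)) i = a * (e.repr (D (e j)) j + e.repr (D (e k)) k) ∧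
      a * e.repr (D (e i)) j = -b * e.repr (D (e j)) i ∧
      a * e.repr (D (e i)) k = -c * e.repr (D (e k)) i := by
  have mem : ∀ m ∈ ({i, j, k} : Set ι), e m ∈ Submodule.span R {e i, e j, e k} := by
    rintro m (rfl | rfl | rfl) <;> exact Submodule.subset_span (by simp)
  have expand : ∀ m ∈ ({i, j, k} : Set ι), D (e m) = e.repr (D (e m)) i • e i +
      e.repr (D (e m)) j • e j + e.repr (D (e m)) k • e k := fun m hm =>
    e.eq_sum_repr_of_mem_span_triple hij hjk hki (hD _ (mem m hm))
  have hik_lie : ⁅e i, e k⁆ = -b • e j := by rw [← lie_skew, hki_lie, neg_smul]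
  have hji_lie : ⁅e j, e i⁆ = -c • e k := by rw [← lie_skew, hij_lie, neg_smul]
  have leibniz : a • D (e i) = ⁅D (e j), e k⁆ + ⁅e j, D (e k)⁆ := by
    rw [← map_smul, ← hjk_lie, apply_lie_eq_add, add_comm]
  rw [expand i (by simp), expand j (by simp), expand k (by simp)] at leibniz
  simp only [add_lie, lie_add, smul_lie, lie_smul, lie_self, hjk_lie, hik_lie, hji_lie,
    smul_zero, add_zero, smul_smul] at leibniz
  have coord (m : ι) := congrArg (fun x => e.repr x m) leibniz
  have ci := coord i
  have cj := coord j
  have ck := coord k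
  simp [hij, hjk, hki, hij.symm, hjk.symm, hki.symm] at ci cj ck
  exact ⟨by linear_combination ci, by linear_combination cj, by linear_combination ck⟩

theorem eq_zero_of_symmetric_of_cyclic_lie [IsDomain R] [NeZero (2 : R)]
    (D : LieDerivation R L L) (hij : i ≠ j) (hjk : j ≠ k) (hki : k ≠ i)
    (hjk_lie : ⁅e j, e k⁆ = a • e i) (hki_lie : ⁅e k, e i⁆ = b • e j)
    (hij_lie : ⁅e i, e j⁆ = c • e k)
    (habc : a * b * c ≠ 0) (hsum : a + b + c = 0)
    (hD : ∀ x ∈ Submodule.span R {e i, e j, e k}, D x ∈ Submodule.span R {e i, e j, e k})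
    (hsymm : ∀ p ∈ ({i, j, k} : Set ι), ∀ q ∈ ({i, j, k} : Set ι),
      e.repr (D (e p)) q = e.repr (D (e q)) p) :
    D (e i) = 0 ∧ D (e j) = 0 ∧ D (e k) = 0 := by
  have ha : a ≠ 0 := left_ne_zero_of_mul (left_ne_zero_of_mul habc)
  have hb : b ≠ 0 := right_ne_zero_of_mul (left_ne_zero_of_mul habc)
  have hc : c ≠ 0 := right_ne_zero_of_mul habc
  have hD_rot {p q r : ι} (h : ({e p, e q, e r} : Set L) = {e i, e j, e k}) :
      ∀ x ∈ Submodule.span R {e p, e q, e r}, D x ∈ Submodule.span R {e p, e q, e r} :=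
    h ▸ hD
  obtain ⟨dii, oij, oik⟩ := repr_apply_of_cyclic_lie D hij hjk hki hjk_lie hki_lie hij_lie hD
  obtain ⟨djj, ojk, -⟩ := repr_apply_of_cyclic_lie D hjk hki hij hki_lie hij_lie hjk_lie
    (hD_rot (by ext; simp only [Set.mem_insert_iff, Set.mem_singleton_iff]; tauto))
  obtain ⟨dkk, -, -⟩ := repr_apply_of_cyclic_lie D hki hij hjk hij_lie hjk_lie hki_lie
    (hD_rot (by ext; simp only [Set.mem_insert_iff, Set.mem_singleton_iff]; tauto))
  have sij := hsymm i (by simp) j (by simp)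
  have sik := hsymm i (by simp) k (by simp)
  have sjk := hsymm j (by simp) k (by simp)
  -- symmetry turns `a d_ji = -b d_ij` into `(a + b) d_ij = -c d_ij = 0`
  have zij : e.repr (D (e i)) j = 0 := (mul_eq_zero.mp (by
    linear_combination e.repr (D (e i)) j * hsum - oij - b * sij)).resolve_left hc
  have zik : e.repr (D (e i)) k = 0 := (mul_eq_zero.mp (by
    linear_combination e.repr (D (e i)) k * hsum - oik - c * sik)).resolve_left hb
  have zjk : e.repr (D (e j)) k = 0 := (mul_eq_zero.mp (by
    linear_combination e.repr (D (e j)) k * hsum - ojk - c * sjk)).resolve_left ha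
  -- the diagonal satisfies `d_ii = d_jj + d_kk` cyclically, which forces it to vanish
  have eq_zero_of_cyclic_sums {x y z : R} (hx : x = y + z) (hy : y = z + x) : z = 0 :=
    (mul_eq_zero.mp (by linear_combination -hx - hy : (2 : R) * z = 0)).resolve_left two_ne_zero
  have dii' := mul_left_cancel₀ ha dii
  have djj' := mul_left_cancel₀ hb djj
  have dkk' := mul_left_cancel₀ hc dkk
  have eq_zero_of_repr {m : ι} (hm : m ∈ ({i, j, k} : Set ι)) (hi : e.repr (D (e m)) i = 0)
      (hj : e.repr (D (e m)) j = 0) (hk : e.repr (D (e m)) k = 0) : D (e m) = 0 := by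
    have hem : e m ∈ Submodule.span R {e i, e j, e k} :=
      Submodule.subset_span (by rcases hm with rfl | rfl | rfl <;> simp)
    rw [e.eq_sum_repr_of_mem_span_triple hij hjk hki (hD _ hem), hi, hj, hk]
    simp
  refine ⟨eq_zero_of_repr (by simp) (eq_zero_of_cyclic_sums djj' dkk') zij zik,
    eq_zero_of_repr (by simp) (sij ▸ zij) (eq_zero_of_cyclic_sums dkk' dii') zjk,
    eq_zero_of_repr (by simp) (sik ▸ zik) (sjk ▸ zjk) (eq_zero_of_cyclic_sums dii' djj')⟩

end LieDerivation

theorem LieAlgebra.trace_ad_eq_zero_of_lie_eq_smul {R L : Type*} [CommRing R] [IsDomain R]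
    [LieRing L] [LieAlgebra R L] {x y z : L} {c : R} (hc : c ≠ 0) (h : ⁅y, z⁆ = c • x) :
    LinearMap.trace R L (LieAlgebra.ad R L x) = 0 := by
  let := LieRing.ofAssociativeRing (A := Module.End R L)
  have : c * LinearMap.trace R L (LieAlgebra.ad R L x) = 0 := by
    rw [← smul_eq_mul, ← map_smul, ← map_smul, ← h, LieHom.map_lie, LinearMap.trace_lie]
  exact (mul_eq_zero.mp this).resolve_left hc

theorem sl2_extension_is_trivial_general {L : Type*} [LieRing L] [LieAlgebra ℝ L]
    (ip : L →ₗ[ℝ] L →ₗ[ℝ] ℝ)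
    (e : Module.Basis (Fin 4) ℝ L)
    (horth : ∀ i j, ip (e i) (e j) = if i = j then 1 else 0)
    (lam : Fin 3 → ℝ)
    (h23 : ⁅e 2, e 3⁆ = lam 0 • e 1)
    (h31 : ⁅e 3, e 1⁆ = lam 1 • e 2)
    (h12 : ⁅e 1, e 2⁆ = lam 2 • e 3)
    (hne : lam 0 * lam 1 * lam 2 ≠ 0)
    (hsum : lam 0 + lam 1 + lam 2 = 0)
    (hideal : ∀ X : L, ∀ Y ∈ Submodule.span ℝ ({e 1, e 2, e 3} : Set L),
      ⁅X, Y⁆ ∈ Submodule.span ℝ ({e 1, e 2, e 3} : Set L))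
    (hselfadj : ∀ X ∈ Submodule.span ℝ ({e 1, e 2, e 3} : Set L),
      ∀ Y ∈ Submodule.span ℝ ({e 1, e 2, e 3} : Set L),
        ip ⁅e 0, X⁆ Y = ip X ⁅e 0, Y⁆) :
    (∀ X ∈ Submodule.span ℝ ({e 1, e 2, e 3} : Set L), ⁅e 0, X⁆ = 0) ∧
      (∀ X : L, LinearMap.trace ℝ L (LieAlgebra.ad ℝ L X) = 0) := by
  have hsymm : ∀ p ∈ ({1, 2, 3} : Set (Fin 4)), ∀ q ∈ ({1, 2, 3} : Set (Fin 4)),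
      e.repr ⁅e 0, e p⁆ q = e.repr ⁅e 0, e q⁆ p := by
    rintro p hp q hq
    rw [← apply_basis_right_eq_repr horth, ← apply_basis_left_eq_repr horth]
    exact hselfadj _ (Submodule.subset_span (by rcases hp with rfl | rfl | rfl <;> simp))
      _ (Submodule.subset_span (by rcases hq with rfl | rfl | rfl <;> simp))
  obtain ⟨h1, h2, h3⟩ := (LieDerivation.ad ℝ L (e 0)).eq_zero_of_symmetric_of_cyclic_lie
    (by decide) (by decide) (by decide) h23 h31 h12 hne hsum (by simpa using hideal (e 0))
    (by simpa using hsymm)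
  simp only [LieDerivation.ad_apply_apply] at h1 h2 h3
  have hcentral : ∀ X ∈ Submodule.span ℝ ({e 1, e 2, e 3} : Set L), ⁅e 0, X⁆ = 0 :=
    fun X hX => LinearMap.eqOn_span (f := LieAlgebra.ad ℝ L (e 0)) (g := 0)
      (by rintro _ (rfl | rfl | rfl) <;> simp [h1, h2, h3]) hX
  have had0 : LieAlgebra.ad ℝ L (e 0) = 0 := e.ext fun j => by
    fin_cases j <;> simp [h1, h2, h3]
  refine ⟨hcentral, fun X => ?_⟩
  suffices (LinearMap.trace ℝ L).comp (LieAlgebra.ad ℝ L : L →ₗ[ℝ] Module.End ℝ L) = 0 from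
    LinearMap.congr_fun this X
  have hl01 := left_ne_zero_of_mul hne
  refine e.ext fun j => ?_
  fin_cases j
  · simp [had0]
  · exact LieAlgebra.trace_ad_eq_zero_of_lie_eq_smul (left_ne_zero_of_mul hl01) h23
  · exact LieAlgebra.trace_ad_eq_zero_of_lie_eq_smul (right_ne_zero_of_mul hl01) h31
  · exact LieAlgebra.trace_ad_eq_zero_of_lie_eq_smul (right_ne_zero_of_mul hne) h12

/-- In a 4-dimensional real metric Lie algebra with orthonormal basis
`{e₀,e₁,e₂,e₃}` where `u = span{e₁,e₂,e₃}` is an ideal isomorphic to `sl(2,ℝ)` (brackets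
`[e₂,e₃] = λ₁e₁`, `[e₃,e₁] = λ₂e₂`, `[e₁,e₂] = λ₃e₃`, `λ₁λ₂λ₃ ≠ 0`, `λ₁+λ₂+λ₃ = 0`) and
`ad_{e₀}` acts on `u` as a self-adjoint derivation, one has `ad_{e₀} = 0` on `u`, and the
Lie algebra is unimodular (a direct sum `ℝ ⊕ sl(2,ℝ)`). -/
theorem sl2_extension_is_trivial {L : Type*} [LieRing L] [LieAlgebra ℝ L]
    [FiniteDimensional ℝ L]
    (ip : L →ₗ[ℝ] L →ₗ[ℝ] ℝ)
    (hsymm : ∀ x y : L, ip x y = ip y x)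
    (hpos : ∀ x : L, x ≠ 0 → 0 < ip x x)
    (e : Module.Basis (Fin 4) ℝ L)
    (horth : ∀ i j, ip (e i) (e j) = if i = j then 1 else 0)
    (lam : Fin 3 → ℝ)
    (h23 : ⁅e 2, e 3⁆ = lam 0 • e 1)
    (h31 : ⁅e 3, e 1⁆ = lam 1 • e 2)
    (h12 : ⁅e 1, e 2⁆ = lam 2 • e 3)
    (hne : lam 0 * lam 1 * lam 2 ≠ 0)
    (hsum : lam 0 + lam 1 + lam 2 = 0)
    (hideal : ∀ X : L, ∀ Y ∈ Submodule.span ℝ ({e 1, e 2, e 3} : Set L),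
      ⁅X, Y⁆ ∈ Submodule.span ℝ ({e 1, e 2, e 3} : Set L))
    (hselfadj : ∀ X ∈ Submodule.span ℝ ({e 1, e 2, e 3} : Set L),
      ∀ Y ∈ Submodule.span ℝ ({e 1, e 2, e 3} : Set L),
        ip ⁅e 0, X⁆ Y = ip X ⁅e 0, Y⁆) :
    (∀ X ∈ Submodule.span ℝ ({e 1, e 2, e 3} : Set L), ⁅e 0, X⁆ = 0) ∧
      (∀ X : L, LinearMap.trace ℝ L (LieAlgebra.ad ℝ L X) = 0) :=
  sl2_extension_is_trivial_general ip e horth lam h23 h31 h12 hne hsum hideal hselfadj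
end

section
/- Let u be the 3-dimensional Lie algebra e(1,1) with orthonormal basis {e₁,e₂,e₃} and brackets [e₂,e₃] = λe₁, [e₃,e₁] = −λe₂, [e₁,e₂] = 0, with λ > 0. If D is a derivation of u that is self-adjoint with respect to the inner product, then in the basis {e₁,e₂,e₃}, D has the form D(e₁) = μe₁ + a e₂, D(e₂) = a e₁ + μ e₂, D(e₃) = 0 for some real μ, a. -/
/-- Let `u` be the 3-dimensional Lie algebra `e(1,1)` with orthonormal basis
`{e₁,e₂,e₃}` and brackets `[e₂,e₃] = λe₁`, `[e₃,e₁] = −λe₂`, `[e₁,e₂] = 0`, `λ > 0`.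
Any self-adjoint derivation `D` of `u` has the form `D(e₁) = μe₁ + ae₂`,
`D(e₂) = ae₁ + μe₂`, `D(e₃) = 0` for some real `μ, a`. -/
theorem selfadjoint_derivation_of_e11 {L : Type*} [LieRing L] [LieAlgebra ℝ L]
    [FiniteDimensional ℝ L]
    (ip : L →ₗ[ℝ] L →ₗ[ℝ] ℝ)
    (hsymm : ∀ x y : L, ip x y = ip y x)
    (hpos : ∀ x : L, x ≠ 0 → 0 < ip x x)
    (e : Module.Basis (Fin 3) ℝ L)
    (horth : ∀ i j, ip (e i) (e j) = if i = j then 1 else 0)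
    (lam : ℝ) (hlam : 0 < lam)
    (h23 : ⁅e 1, e 2⁆ = lam • e 0)
    (h31 : ⁅e 2, e 0⁆ = -lam • e 1)
    (h12 : ⁅e 0, e 1⁆ = 0)
    (D : L →ₗ[ℝ] L)
    (hder : ∀ X Y : L, D ⁅X, Y⁆ = ⁅D X, Y⁆ + ⁅X, D Y⁆)
    (hselfadj : ∀ X Y : L, ip (D X) Y = ip X (D Y)) :
    ∃ μ a : ℝ, D (e 0) = μ • e 0 + a • e 1 ∧ D (e 1) = a • e 0 + μ • e 1 ∧ D (e 2) = 0 := by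
  set c : Fin 3 → Fin 3 → ℝ := fun i j => e.repr (D (e i)) j with hc
  have hrep : ∀ i, D (e i) = c i 0 • e 0 + c i 1 • e 1 + c i 2 • e 2 := by
    intro i
    have h := Module.Basis.sum_repr e (D (e i))
    rw [Fin.sum_univ_three] at h
    exact h.symm
  -- other bracket relations
  have b10 : ⁅e 1, e 0⁆ = (0 : L) := by rw [← lie_skew, h12, neg_zero]
  have b21 : ⁅e 2, e 1⁆ = -(lam • e 0) := by rw [← lie_skew, h23]
  have b02 : ⁅e 0, e 2⁆ = -(-lam • e 1) := by rw [← lie_skew, h31]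
  -- symmetry of coefficients
  have hip : ∀ (x : L) (j : Fin 3), ip x (e j) = e.repr x j := by
    intro x j
    conv_lhs => rw [← Module.Basis.sum_repr e x]
    rw [Fin.sum_univ_three]
    fin_cases j <;>
      simp [horth]
  have hsym : ∀ i j, c i j = c j i := by
    intro i j
    rw [hc]
    dsimp only
    rw [← hip, ← hip, hselfadj, hsymm]
  -- derivation equations
  have E0 := hder (e 0) (e 1)
  have E1 := hder (e 1) (e 2)
  have E2 := hder (e 2) (e 0)
  rw [h12, map_zero, hrep 0, hrep 1] at E0
  rw [h23, map_smul, hrep 0, hrep 1, hrep 2] at E1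
  rw [h31, map_smul, hrep 1, hrep 2, hrep 0] at E2
  simp only [add_lie, lie_add, smul_lie, lie_smul, h12, h23, h31, b10, b21, b02,
    lie_self, smul_zero, zero_add, add_zero, smul_neg, neg_smul, neg_neg, smul_smul] at E0 E1 E2
  have rr : ∀ (i j : Fin 3), e.repr (e i) j = if i = j then 1 else 0 := by
    intro i j; rw [Module.Basis.repr_self, Finsupp.single_apply]
  have A0 := congrArg (fun x => e.repr x 0) E0
  have A1 := congrArg (fun x => e.repr x 1) E0
  have B0 := congrArg (fun x => e.repr x 0) E1
  have B2 := congrArg (fun x => e.repr x 2) E1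
  have C1 := congrArg (fun x => e.repr x 1) E2
  have C2 := congrArg (fun x => e.repr x 2) E2
  simp only [map_add, map_smul, map_neg, map_zero, rr, smul_eq_mul, Finsupp.coe_zero,
    Pi.zero_apply, Finsupp.coe_add, Pi.add_apply, Finsupp.coe_smul, Pi.smul_apply,
    Finsupp.coe_neg, Pi.neg_apply] at A0 A1 B0 B2 C1 C2
  norm_num [Fin.ext_iff] at A0 A1 B0 B2 C1 C2
  have hl := hlam.ne'
  -- extract coefficient equalities
  have h02 : c 0 2 = 0 := by
    rcases A0 with h | h
    · exact h
    · exact absurd h hl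
  have h12' : c 1 2 = 0 := by
    rcases A1 with h | h
    · exact h
    · exact absurd h hl
  have h22 : c 2 2 = 0 := by
    have h : lam * c 2 2 = 0 := by linarith
    exact (mul_eq_zero.mp h).resolve_left hl
  have h11 : c 1 1 = c 0 0 := by
    have h : lam * c 1 1 = lam * c 0 0 := by nlinarith [B0, C1]
    exact mul_left_cancel₀ hl h
  have h20 : c 2 0 = 0 := by rw [hsym 2 0]; exact h02
  have h21 : c 2 1 = 0 := by rw [hsym 2 1]; exact h12'
  refine ⟨c 0 0, c 0 1, ?_, ?_, ?_⟩
  · rw [hrep 0, h02, zero_smul, add_zero]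
  · rw [hrep 1, h11, h12', hsym 1 0, zero_smul, add_zero]
  · rw [hrep 2, h20, h21, h22]; simp
end

section
/- Consider ℝⁿ with brackets [e_n, e_i] = α_i e_i for 1 ≤ i ≤ n−1 and [e_i,e_j] = 0 for 1 ≤ i < j ≤ n−1, where (α₁,…,α_{n−1}) ∈ ℝ^{n−1}, and the inner product making {e₁,…,e_n} orthonormal. Then this is a solvable Lie algebra whose inner product is cyclic, and it is unimodular if and only if α₁ + ⋯ + α_{n−1} = 0. -/
/-!
The span `A` of `e₁, …, e_{n-1}` is an abelian subspace containing every bracket, so the derived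
series stops at the second step. The cyclic sum and `X ↦ tr (ad X)` are multilinear, so both can be
checked on basis vectors: there `ad e_n` is diagonal with entries `α₁, …, α_{n-1}, 0`, while
`ad e_i` (`i < n`) maps `e_n` into `A` and kills `A`, so it has zero diagonal.
-/

open Module LieAlgebra

section

variable {R L ι : Type*} [CommRing R] [LieRing L] [LieAlgebra R L]

theorem LinearMap.trace_eq_sum_repr_apply {M : Type*} [AddCommGroup M] [Module R M] [Fintype ι]
    [DecidableEq ι] (b : Basis ι R M) (f : M →ₗ[R] M) :
    trace R M f = ∑ i, b.repr (f (b i)) i := by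
  simp [trace_eq_matrix_trace R b, Matrix.trace, LinearMap.toMatrix_apply]

theorem LieAlgebra.isSolvable_of_lie_mem_of_lie_eq_zero (A : Submodule R L)
    (hA : ∀ x y : L, ⁅x, y⁆ ∈ A) (hAA : ∀ x ∈ A, ∀ y ∈ A, ⁅x, y⁆ = 0) : IsSolvable L := by
  have hD : ∀ x ∈ derivedSeries R L 1, x ∈ A := by
    intro x hx
    rw [derivedSeries_def, derivedSeriesOfIdeal_succ, derivedSeriesOfIdeal_zero,
      ← LieSubmodule.mem_toSubmodule, LieSubmodule.lieIdeal_oper_eq_linear_span'] at hx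
    refine Submodule.span_le.2 ?_ hx
    rintro _ ⟨x, -, y, -, rfl⟩
    exact hA x y
  refine IsSolvable.mk (R := R) (k := 2) ?_
  rw [derivedSeries_def, derivedSeriesOfIdeal_succ, ← derivedSeries_def,
    LieSubmodule.lie_eq_bot_iff]
  exact fun x hx y hy => hAA x (hD x hx) y (hD y hy)

theorem lie_mem_of_basis (b : Basis ι R L) (A : Submodule R L) (h : ∀ i j, ⁅b i, b j⁆ ∈ A)
    (x y : L) : ⁅x, y⁆ ∈ A := by
  have : (ad R L : L →ₗ[R] Module.End R L).compr₂ A.mkQ = 0 :=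
    LinearMap.ext_basis b b fun i j => by simpa using h i j
  simpa using congr($this x y)

theorem lie_eq_zero_of_mem_span {s : Set L} (h : ∀ x ∈ s, ∀ y ∈ s, ⁅x, y⁆ = 0) {x y : L}
    (hx : x ∈ Submodule.span R s) (hy : y ∈ Submodule.span R s) : ⁅x, y⁆ = 0 := by
  have hs : ∀ x ∈ s, ⁅x, y⁆ = 0 := fun x hx' =>
    LinearMap.eqOn_span (f := ad R L x) (g := 0) (fun z hz => h x hx' z hz) hy
  exact LinearMap.eqOn_span (f := (ad R L : L →ₗ[R] Module.End R L).flip y) (g := 0) hs hx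

theorem lie_cyclic_of_basis (ip : L →ₗ[R] L →ₗ[R] R) (b : Basis ι R L)
    (h : ∀ i j k, ip ⁅b i, b j⁆ (b k) + ip ⁅b j, b k⁆ (b i) + ip ⁅b k, b i⁆ (b j) = 0)
    (x y z : L) : ip ⁅x, y⁆ z + ip ⁅y, z⁆ x + ip ⁅z, x⁆ y = 0 := by
  let T : L →ₗ[R] L →ₗ[R] L →ₗ[R] R := (ad R L : L →ₗ[R] Module.End R L).compr₂ ip
  -- `rot T x y z = T y z x`
  let rot (T : L →ₗ[R] L →ₗ[R] L →ₗ[R] R) := (LinearMap.lflip.toLinearMap ∘ₗ T).flip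
  have : T + rot T + rot (rot T) = 0 :=
    b.ext fun i => LinearMap.ext_basis b b fun j k => by simpa [T, rot] using h i j k
  simpa [T, rot] using congr($this x y z)

namespace DiagonalAlmostAbelian

variable {n : ℕ} {e : Basis (Fin (n + 1)) R L} {α : Fin n → R}
  (hbr : ∀ i : Fin n, ⁅e (Fin.last n), e i.castSucc⁆ = α i • e i.castSucc)
  (hab : ∀ i j : Fin n, ⁅e i.castSucc, e j.castSucc⁆ = 0)
include hbr

theorem lie_castSucc_last (i : Fin n) :
    ⁅e i.castSucc, e (Fin.last n)⁆ = -(α i • e i.castSucc) := by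
  rw [← lie_skew, hbr]

include hab

theorem isSolvable : IsSolvable L := by
  set A := Submodule.span R (Set.range fun i : Fin n => e i.castSucc)
  have hmem (i : Fin n) : e i.castSucc ∈ A := Submodule.subset_span ⟨i, rfl⟩
  refine isSolvable_of_lie_mem_of_lie_eq_zero A (lie_mem_of_basis e A fun i j => ?_)
    fun x hx y hy => lie_eq_zero_of_mem_span ?_ hx hy
  · rcases Fin.eq_castSucc_or_eq_last i with ⟨a, rfl⟩ | rfl <;>
      rcases Fin.eq_castSucc_or_eq_last j with ⟨b, rfl⟩ | rfl <;>
      simp [hbr, hab, lie_castSucc_last hbr, A.smul_mem, A.neg_mem, hmem]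
  · rintro _ ⟨i, rfl⟩ _ ⟨j, rfl⟩
    exact hab i j

theorem lie_cyclic (ip : L →ₗ[R] L →ₗ[R] R)
    (horth : ∀ i j, ip (e i) (e j) = if i = j then 1 else 0) (x y z : L) :
    ip ⁅x, y⁆ z + ip ⁅y, z⁆ x + ip ⁅z, x⁆ y = 0 := by
  refine lie_cyclic_of_basis ip e (fun i j k => ?_) x y z
  rcases Fin.eq_castSucc_or_eq_last i with ⟨a, rfl⟩ | rfl <;>
    rcases Fin.eq_castSucc_or_eq_last j with ⟨b, rfl⟩ | rfl <;>
    rcases Fin.eq_castSucc_or_eq_last k with ⟨c, rfl⟩ | rfl <;>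
    simp [hbr, hab, lie_castSucc_last hbr, horth, Fin.castSucc_inj,
      (Fin.castSucc_lt_last _).ne] <;>
    (split_ifs <;> simp_all)

theorem trace_ad_castSucc (i : Fin n) : LinearMap.trace R L (ad R L (e i.castSucc)) = 0 := by
  classical
  simp [LinearMap.trace_eq_sum_repr_apply e, Fin.sum_univ_castSucc, hab,
    lie_castSucc_last hbr, (Fin.castSucc_lt_last _).ne]

omit hab in
theorem trace_ad_last : LinearMap.trace R L (ad R L (e (Fin.last n))) = ∑ i, α i := by
  classical
  simp [LinearMap.trace_eq_sum_repr_apply e, Fin.sum_univ_castSucc, hbr]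

theorem trace_ad_eq_zero_iff : (∀ x : L, LinearMap.trace R L (ad R L x) = 0) ↔ ∑ i, α i = 0 := by
  have hbasis : (∀ x : L, LinearMap.trace R L (ad R L x) = 0) ↔
      ∀ i, LinearMap.trace R L (ad R L (e i)) = 0 :=
    ⟨fun h i => h (e i), fun h x => LinearMap.congr_fun
      (e.ext (f₁ := LinearMap.trace R L ∘ₗ (ad R L : L →ₗ[R] Module.End R L)) (f₂ := 0) h) x⟩
  simp [hbasis, Fin.forall_fin_succ', trace_ad_castSucc hbr hab, trace_ad_last hbr]

end DiagonalAlmostAbelian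

end

theorem G_n_alpha_solvable_cyclic_unimodular_iff_general {L : Type*} [LieRing L] [LieAlgebra ℝ L]
    {n : ℕ}
    (ip : L →ₗ[ℝ] L →ₗ[ℝ] ℝ)
    (e : Module.Basis (Fin (n + 1)) ℝ L)
    (horth : ∀ i j, ip (e i) (e j) = if i = j then 1 else 0)
    (α : Fin n → ℝ)
    (hbr : ∀ i : Fin n, ⁅e (Fin.last n), e i.castSucc⁆ = α i • e i.castSucc)
    (hab : ∀ i j : Fin n, ⁅e i.castSucc, e j.castSucc⁆ = 0) :
    LieAlgebra.IsSolvable L ∧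
      (∀ X Y Z : L, ip ⁅X, Y⁆ Z + ip ⁅Y, Z⁆ X + ip ⁅Z, X⁆ Y = 0) ∧
      ((∀ X : L, LinearMap.trace ℝ L (LieAlgebra.ad ℝ L X) = 0) ↔ ∑ i, α i = 0) :=
  ⟨DiagonalAlmostAbelian.isSolvable hbr hab, DiagonalAlmostAbelian.lie_cyclic hbr hab ip horth,
    DiagonalAlmostAbelian.trace_ad_eq_zero_iff hbr hab⟩

/-- The Lie algebra with orthonormal basis `{e₁,…,e_n}` and brackets
`[e_n, e_i] = α_i e_i` (`1 ≤ i ≤ n−1`), `[e_i,e_j] = 0` (`i,j ≤ n−1`) is solvable, its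
inner product is cyclic, and it is unimodular iff `α₁ + ⋯ + α_{n−1} = 0`. -/
theorem G_n_alpha_solvable_cyclic_unimodular_iff {L : Type*} [LieRing L] [LieAlgebra ℝ L]
    [FiniteDimensional ℝ L] {n : ℕ}
    (ip : L →ₗ[ℝ] L →ₗ[ℝ] ℝ)
    (hsymm : ∀ x y : L, ip x y = ip y x)
    (hpos : ∀ x : L, x ≠ 0 → 0 < ip x x)
    (e : Module.Basis (Fin (n + 1)) ℝ L)
    (horth : ∀ i j, ip (e i) (e j) = if i = j then 1 else 0)
    (α : Fin n → ℝ)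
    (hbr : ∀ i : Fin n, ⁅e (Fin.last n), e i.castSucc⁆ = α i • e i.castSucc)
    (hab : ∀ i j : Fin n, ⁅e i.castSucc, e j.castSucc⁆ = 0) :
    LieAlgebra.IsSolvable L ∧
      (∀ X Y Z : L, ip ⁅X, Y⁆ Z + ip ⁅Y, Z⁆ X + ip ⁅Z, X⁆ Y = 0) ∧
      ((∀ X : L, LinearMap.trace ℝ L (LieAlgebra.ad ℝ L X) = 0) ↔ ∑ i, α i = 0) :=
  G_n_alpha_solvable_cyclic_unimodular_iff_general ip e horth α hbr hab
end

section
/- Let g be a nontrivial (nonabelian or nonzero) finite-dimensional real solvable Lie algebra with cyclic inner product, and {e₁,…,e_n} an adapted orthonormal basis (so g₁ = span{e₁,…,e_{n−1}} is an ideal). Then g splits as the orthogonal semidirect sum of ℝe_n and g₁, the restriction of the inner product to g₁ is cyclic, and ad_{e_n} restricted to g₁ is self-adjoint. -/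
/-!
Taking `k = n` in the adaptedness condition shows that every bracket is orthogonal to `eₙ`, and
orthonormality identifies `g₁` with the orthogonal complement of `eₙ`; hence `[g, g] ⊆ g₁`, so
`g₁` is an ideal. In the cyclic identity for `(eₙ, X, Y)` the term `⟨[X, Y], eₙ⟩` then vanishes,
leaving `⟨[eₙ, X], Y⟩ = -⟨[Y, eₙ], X⟩ = ⟨X, [eₙ, Y]⟩`.
-/

open Submodule Set

namespace Module.Basis

variable {R M : Type*} [CommSemiring R] [AddCommMonoid M] [Module R M]

lemma apply_basis_eq_repr_of_orthonormal {ι : Type*} [DecidableEq ι] (b : Basis ι R M)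
    (B : M →ₗ[R] M →ₗ[R] R)
    (hb : ∀ i j, B (b i) (b j) = if i = j then 1 else 0) (x : M) (k : ι) :
    B x (b k) = b.repr x k :=
  LinearMap.congr_fun (b.ext (f₁ := B.flip (b k)) (f₂ := b.coord k) fun i => by
    simp [hb, Finsupp.single_apply]) x

lemma mem_span_castSucc_iff {n : ℕ} (b : Basis (Fin (n + 1)) R M) (x : M) :
    x ∈ span R (range fun i : Fin n => b i.castSucc) ↔ b.repr x (Fin.last n) = 0 := by
  have hrange : range (Fin.castSucc : Fin n → Fin (n + 1)) = {Fin.last n}ᶜ := by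
    ext i
    exact Fin.exists_castSucc_eq
  rw [← Function.comp_def b, range_comp, b.mem_span_image, hrange, subset_compl_singleton_iff,
    Finset.mem_coe, Finsupp.notMem_support_iff]

end Module.Basis

lemma Submodule.span_singleton_last_sup_span_castSucc {R M : Type*} [Semiring R]
    [AddCommMonoid M] [Module R M] {n : ℕ} (v : Fin (n + 1) → M) :
    span R {v (Fin.last n)} ⊔ span R (range fun i : Fin n => v i.castSucc) = span R (range v) := by
  rw [← span_insert, ← Fin.range_snoc]
  exact congrArg (span R ∘ range) (Fin.snoc_init_self v)

lemma LieAlgebra.apply_lie_eq_zero_of_basis {R L ι : Type*} [CommRing R] [LieRing L]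
    [LieAlgebra R L]
    (b : Module.Basis ι R L) (f : L →ₗ[R] R) (h : ∀ i j, f ⁅b i, b j⁆ = 0) (X Y : L) :
    f ⁅X, Y⁆ = 0 :=
  LinearMap.congr_fun₂ (LinearMap.ext_basis b b
    (B := (LieModule.toEnd R L L : L →ₗ[R] Module.End R L).compr₂ f) (B' := 0)
    (by simpa using h)) X Y

lemma apply_lie_eq_apply_lie_of_cyclic {R L : Type*} [CommRing R] [LieRing L] [LieAlgebra R L]
    (B : L →ₗ[R] L →ₗ[R] R) (hsymm : ∀ x y, B x y = B y x)
    (hcyc : ∀ X Y Z : L, B ⁅X, Y⁆ Z + B ⁅Y, Z⁆ X + B ⁅Z, X⁆ Y = 0) {X Y Z : L}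
    (h : B ⁅X, Y⁆ Z = 0) : B ⁅Z, X⁆ Y = B X ⁅Z, Y⁆ := by
  have hskew : B ⁅Y, Z⁆ X = -B X ⁅Z, Y⁆ := by
    rw [← lie_skew, map_neg, LinearMap.neg_apply, hsymm]
  linear_combination hcyc Z X Y - h - hskew

theorem solvable_cyclic_splits_general {L : Type*} [LieRing L] [LieAlgebra ℝ L]
    {n : ℕ}
    (ip : L →ₗ[ℝ] L →ₗ[ℝ] ℝ)
    (hsymm : ∀ x y : L, ip x y = ip y x)
    (hcyc : ∀ X Y Z : L, ip ⁅X, Y⁆ Z + ip ⁅Y, Z⁆ X + ip ⁅Z, X⁆ Y = 0)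
    (e : Module.Basis (Fin (n + 1)) ℝ L)
    (horth : ∀ i j, ip (e i) (e j) = if i = j then 1 else 0)
    (hadapted : ∀ i j k : Fin (n + 1), max i j ≤ k → ip ⁅e i, e j⁆ (e k) = 0) :
    (∀ Y ∈ Submodule.span ℝ (Set.range fun i : Fin n => e i.castSucc),
        ∀ X : L, ⁅X, Y⁆ ∈ Submodule.span ℝ (Set.range fun i : Fin n => e i.castSucc)) ∧
      (Submodule.span ℝ ({e (Fin.last n)} : Set L) ⊔
          Submodule.span ℝ (Set.range fun i : Fin n => e i.castSucc) = ⊤) ∧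
      (∀ Y ∈ Submodule.span ℝ (Set.range fun i : Fin n => e i.castSucc),
        ip (e (Fin.last n)) Y = 0) ∧
      (∀ X ∈ Submodule.span ℝ (Set.range fun i : Fin n => e i.castSucc),
        ∀ Y ∈ Submodule.span ℝ (Set.range fun i : Fin n => e i.castSucc),
          ∀ Z ∈ Submodule.span ℝ (Set.range fun i : Fin n => e i.castSucc),
            ip ⁅X, Y⁆ Z + ip ⁅Y, Z⁆ X + ip ⁅Z, X⁆ Y = 0) ∧
      (∀ X ∈ Submodule.span ℝ (Set.range fun i : Fin n => e i.castSucc),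
        ∀ Y ∈ Submodule.span ℝ (Set.range fun i : Fin n => e i.castSucc),
          ip ⁅e (Fin.last n), X⁆ Y = ip X ⁅e (Fin.last n), Y⁆) := by
  set S := Submodule.span ℝ (Set.range fun i : Fin n => e i.castSucc)
  have hmem_S : ∀ x, x ∈ S ↔ ip x (e (Fin.last n)) = 0 := fun x => by
    rw [e.apply_basis_eq_repr_of_orthonormal ip horth, e.mem_span_castSucc_iff]
  have hlie_perp : ∀ X Y : L, ip ⁅X, Y⁆ (e (Fin.last n)) = 0 :=
    LieAlgebra.apply_lie_eq_zero_of_basis e (ip.flip (e (Fin.last n))) fun i j =>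
      hadapted i j _ (max_le (Fin.le_last i) (Fin.le_last j))
  refine ⟨fun Y _ X => (hmem_S _).2 (hlie_perp X Y), ?_, fun Y hY => ?_,
    fun X _ Y _ Z _ => hcyc X Y Z,
    fun X _ Y _ => apply_lie_eq_apply_lie_of_cyclic ip hsymm hcyc (hlie_perp X Y)⟩
  · rw [Submodule.span_singleton_last_sup_span_castSucc, e.span_eq]
  · rw [hsymm]
    exact (hmem_S Y).1 hY

/-- A nontrivial finite-dimensional real solvable Lie algebra with cyclic
inner product and adapted orthonormal basis `{e₁,…,e_n}` (structure constants
`c_{ij}^k = 0` for `k ≥ max{i,j}`) splits as the orthogonal semidirect sum of `ℝ e_n` and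
the ideal `g₁ = span{e₁,…,e_{n−1}}`; the restriction of the inner product to `g₁` is
cyclic, and `ad_{e_n}` restricted to `g₁` is self-adjoint. -/
theorem solvable_cyclic_splits {L : Type*} [LieRing L] [LieAlgebra ℝ L]
    [FiniteDimensional ℝ L] [LieAlgebra.IsSolvable L] {n : ℕ}
    (ip : L →ₗ[ℝ] L →ₗ[ℝ] ℝ)
    (hsymm : ∀ x y : L, ip x y = ip y x)
    (hpos : ∀ x : L, x ≠ 0 → 0 < ip x x)
    (hcyc : ∀ X Y Z : L, ip ⁅X, Y⁆ Z + ip ⁅Y, Z⁆ X + ip ⁅Z, X⁆ Y = 0)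
    (e : Module.Basis (Fin (n + 1)) ℝ L)
    (horth : ∀ i j, ip (e i) (e j) = if i = j then 1 else 0)
    (hadapted : ∀ i j k : Fin (n + 1), max i j ≤ k → ip ⁅e i, e j⁆ (e k) = 0) :
    (∀ Y ∈ Submodule.span ℝ (Set.range fun i : Fin n => e i.castSucc),
        ∀ X : L, ⁅X, Y⁆ ∈ Submodule.span ℝ (Set.range fun i : Fin n => e i.castSucc)) ∧
      (Submodule.span ℝ ({e (Fin.last n)} : Set L) ⊔
          Submodule.span ℝ (Set.range fun i : Fin n => e i.castSucc) = ⊤) ∧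
      (∀ Y ∈ Submodule.span ℝ (Set.range fun i : Fin n => e i.castSucc),
        ip (e (Fin.last n)) Y = 0) ∧
      (∀ X ∈ Submodule.span ℝ (Set.range fun i : Fin n => e i.castSucc),
        ∀ Y ∈ Submodule.span ℝ (Set.range fun i : Fin n => e i.castSucc),
          ∀ Z ∈ Submodule.span ℝ (Set.range fun i : Fin n => e i.castSucc),
            ip ⁅X, Y⁆ Z + ip ⁅Y, Z⁆ X + ip ⁅Z, X⁆ Y = 0) ∧
      (∀ X ∈ Submodule.span ℝ (Set.range fun i : Fin n => e i.castSucc),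
        ∀ Y ∈ Submodule.span ℝ (Set.range fun i : Fin n => e i.castSucc),
          ip ⁅e (Fin.last n), X⁆ Y = ip X ⁅e (Fin.last n), Y⁆) :=
  solvable_cyclic_splits_general ip hsymm hcyc e horth hadapted
end
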